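/- Let n = 2b, let Φ be an n×n real matrix such that in every block-column j there is at most one index i with Φ_{ij} ≠ 0, and let X̂ = X̂₁ × ⋯ × X̂_b be a decomposed set with each X̂_j ⊆ ℝ² nonempty compact convex. Then the decomposed image equals the exact image: X̂' = Φ X̂ (i.e., the decomposition error of the map is zero). -/

import Mathlib

open Set Pointwise Matrix

noncomputable section

/-- The `p`-norm on `ι → ℝ`. -/
def pnorm {ι : Type} [Fintype ι] (p : ℝ) (x : ι → ℝ) : ℝ :=
  (∑ i, |x i| ^ p) ^ (1 / p)

/-- Dot product. -/
def dotp {ι : Type} [Fintype ι] (x y : ι → ℝ) : ℝ := ∑ i, x i * y i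

/-- Support function of a set. -/
def suppF {ι : Type} [Fintype ι] (X : Set (ι → ℝ)) (ℓ : ι → ℝ) : ℝ :=
  sSup (dotp ℓ '' X)

/-- Closed unit ball of the `p`-norm. -/
def pball (ι : Type) [Fintype ι] (p : ℝ) : Set (ι → ℝ) := {x | pnorm p x ≤ 1}

/-- Hausdorff distance with respect to the `p`-norm. -/
def hausP {ι : Type} [Fintype ι] (p : ℝ) (X Y : Set (ι → ℝ)) : ℝ :=
  sInf {ε | 0 ≤ ε ∧ X ⊆ Y + ε • pball ι p ∧ Y ⊆ X + ε • pball ι p}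

/-- Image of a set under a matrix. -/
def mapSet {ι κ : Type} [Fintype ι] [Fintype κ] (M : Matrix ι κ ℝ) (S : Set (κ → ℝ)) :
    Set (ι → ℝ) := M.mulVec '' S

/-- Induced matrix `p`-norm. -/
def matP {ι κ : Type} [Fintype ι] [Fintype κ] (p : ℝ) (M : Matrix ι κ ℝ) : ℝ :=
  sSup {r | ∃ x : κ → ℝ, pnorm p x ≤ 1 ∧ r = pnorm p (M.mulVec x)}

/-- Diameter of a planar set with respect to the dual exponent `q`:
the smallest `Δ ≥ 0` with `ρ_Y(d) + ρ_Y(-d) ≤ ‖d‖_q * Δ` for all `d`. -/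
def diamP (q : ℝ) (Y : Set (Fin 2 → ℝ)) : ℝ :=
  sInf {Δ | 0 ≤ Δ ∧ ∀ d : Fin 2 → ℝ, suppF Y d + suppF Y (-d) ≤ pnorm q d * Δ}

/-- The 2×2 block of `Φ` in block-row `i` and block-column `j`. -/
def blk {b : ℕ} (Φ : Matrix (Fin b × Fin 2) (Fin b × Fin 2) ℝ) (i j : Fin b) :
    Matrix (Fin 2) (Fin 2) ℝ := fun r c => Φ (i, r) (j, c)

/-- The 2×n row-block of `Φ` formed by the rows of block `i`. -/
def rowBlk {b : ℕ} (Φ : Matrix (Fin b × Fin 2) (Fin b × Fin 2) ℝ) (i : Fin b) :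
    Matrix (Fin 2) (Fin b × Fin 2) ℝ := fun r c => Φ (i, r) c

/-- Projection `π_i` onto the `i`-th block of coordinates. -/
def projB {b : ℕ} (i : Fin b) (x : Fin b × Fin 2 → ℝ) : Fin 2 → ℝ := fun r => x (i, r)

/-- Cartesian product of a family of planar sets, as a subset of `ℝⁿ` (`n = 2b`). -/
def prodSet {b : ℕ} (Xh : Fin b → Set (Fin 2 → ℝ)) : Set (Fin b × Fin 2 → ℝ) :=
  {x | ∀ i, projB i x ∈ Xh i}

/-- Cartesian decomposition `D̂(X) = π₁X × ⋯ × π_b X`. -/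
def cartD {b : ℕ} (X : Set (Fin b × Fin 2 → ℝ)) : Set (Fin b × Fin 2 → ℝ) :=
  prodSet (fun i => projB i '' X)

/-- Decomposed image: `X̂'_i = ⨁_j Φ_{ij} X̂_j`. -/
def dimg {b : ℕ} (Φ : Matrix (Fin b × Fin 2) (Fin b × Fin 2) ℝ)
    (Xh : Fin b → Set (Fin 2 → ℝ)) : Fin b → Set (Fin 2 → ℝ) :=
  fun i => ∑ j, mapSet (blk Φ i j) (Xh j)

/-!
A point of the decomposed image comes with separate representatives `z i j ∈ X̂ⱼ` for each
block row `i`. Block column `j` only feeds the one row that owns it, so taking `z (owner j) j`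
for every `j` gives a single point of `X̂` whose exact image is the given point.
-/

section SingleRowColumns

variable {ι κ α β : Type*} [Fintype κ] [AddCommMonoid β]

theorem mem_fintype_sum_image_iff (f : κ → α → β) (S : κ → Set α) (y : β) :
    y ∈ ∑ j, f j '' S j ↔ ∃ x ∈ univ.pi S, ∑ j, f j (x j) = y := by
  rw [Set.mem_fintype_sum]
  constructor
  · rintro ⟨g, hg, rfl⟩
    choose x hx hxg using hg
    exact ⟨x, fun j _ => hx j, Finset.sum_congr rfl fun j _ => hxg j⟩
  · rintro ⟨x, hx, rfl⟩
    exact ⟨fun j => f j (x j), fun j => mem_image_of_mem _ (hx j trivial), rfl⟩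

theorem forall_mem_sum_image_iff (f : ι → κ → α → β) (S : κ → Set α)
    (hf : ∀ j, ∃ i, ∀ i' ≠ i, ∀ a, f i' j a = 0) (y : ι → β) :
    (∀ i, y i ∈ ∑ j, f i j '' S j) ↔ ∃ x ∈ univ.pi S, ∀ i, ∑ j, f i j (x j) = y i := by
  simp only [mem_fintype_sum_image_iff]
  constructor
  · intro hy
    choose z hz hzy using hy
    choose o ho using hf
    refine ⟨fun j => z (o j) j, fun j _ => hz (o j) j trivial, fun i => ?_⟩
    rw [← hzy i]
    refine Finset.sum_congr rfl fun j _ => ?_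
    by_cases hi : i = o j
    · rw [hi]
    · rw [ho j i hi, ho j i hi]
  · rintro ⟨x, hx, hxy⟩ i
    exact ⟨x, hx, hxy i⟩

end SingleRowColumns

lemma projB_mulVec {b : ℕ} (Φ : Matrix (Fin b × Fin 2) (Fin b × Fin 2) ℝ)
    (x : Fin b × Fin 2 → ℝ) (i : Fin b) :
    projB i (Φ *ᵥ x) = ∑ j, blk Φ i j *ᵥ projB j x := by
  funext r
  simp only [projB, mulVec, dotProduct, blk, Finset.sum_apply]
  exact Fintype.sum_prod_type _

lemma mapSet_prodSet {b : ℕ} (Φ : Matrix (Fin b × Fin 2) (Fin b × Fin 2) ℝ)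
    (Xh : Fin b → Set (Fin 2 → ℝ)) :
    mapSet Φ (prodSet Xh) = {y | ∃ x ∈ univ.pi Xh, ∀ i, ∑ j, blk Φ i j *ᵥ x j = projB i y} := by
  ext y
  constructor
  · rintro ⟨x, hx, rfl⟩
    exact ⟨fun j => projB j x, fun j _ => hx j, fun i => (projB_mulVec Φ x i).symm⟩
  · rintro ⟨x, hx, hxy⟩
    refine ⟨fun p => x p.1 p.2, fun j => hx j trivial, funext fun p => ?_⟩
    exact congrFun ((projB_mulVec Φ (fun p => x p.1 p.2) p.1).trans (hxy p.1)) p.2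

lemma exists_forall_ne_blk_eq_zero {b : ℕ} {Φ : Matrix (Fin b × Fin 2) (Fin b × Fin 2) ℝ}
    (hcol : ∀ j i₁ i₂, blk Φ i₁ j ≠ 0 → blk Φ i₂ j ≠ 0 → i₁ = i₂) (j : Fin b) :
    ∃ i, ∀ i' ≠ i, blk Φ i' j = 0 := by
  by_cases h : ∃ i, blk Φ i j ≠ 0
  · obtain ⟨i, hi⟩ := h
    exact ⟨i, fun i' hi' => by_contra fun h' => hi' (hcol j i' i h' hi)⟩
  · push Not at h
    exact ⟨j, fun i' _ => h i'⟩

theorem dimg_eq_mapSet_of_single_block_general {b : ℕ}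
    (Φ : Matrix (Fin b × Fin 2) (Fin b × Fin 2) ℝ)
    (hcol : ∀ j i₁ i₂, blk Φ i₁ j ≠ 0 → blk Φ i₂ j ≠ 0 → i₁ = i₂)
    (Xh : Fin b → Set (Fin 2 → ℝ)) :
    prodSet (dimg Φ Xh) = mapSet Φ (prodSet Xh) := by
  ext y
  rw [mapSet_prodSet, mem_ofPred_eq, ← forall_mem_sum_image_iff _ Xh fun j => ?_]
  · rfl
  obtain ⟨i, hi⟩ := exists_forall_ne_blk_eq_zero hcol j
  exact ⟨i, fun i' hi' a => by rw [hi i' hi', zero_mulVec]⟩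

/-- if every block-column of `Φ` has at most one nonzero 2×2 block,
then the decomposed image of a decomposed set (nonempty compact convex components)
equals the exact image: `X̂' = Φ X̂`. -/
theorem dimg_eq_mapSet_of_single_block {b : ℕ}
    (Φ : Matrix (Fin b × Fin 2) (Fin b × Fin 2) ℝ)
    (hcol : ∀ j i₁ i₂, blk Φ i₁ j ≠ 0 → blk Φ i₂ j ≠ 0 → i₁ = i₂)
    (Xh : Fin b → Set (Fin 2 → ℝ))
    (hne : ∀ j, (Xh j).Nonempty) (hc : ∀ j, IsCompact (Xh j))
    (hconv : ∀ j, Convex ℝ (Xh j)) :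
    prodSet (dimg Φ Xh) = mapSet Φ (prodSet Xh) :=
  dimg_eq_mapSet_of_single_block_general Φ hcol Xh

end
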